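/- For the function δ(ε) defined by δ = 1 if ε ≤ 1/3 and δ = (1-2ε)²/ε² if ε ≥ 1/3, and ε' defined by ε' = 1/2 - (1/2)√((1-3ε)/(1+ε)) if ε ≤ 1/3 and ε' = 1/2 if ε ≥ 1/3, it holds for all ε ∈ (0, 1/2) that ε < ε' ≤ 1/2. -/

import Mathlib

/-- The cutting probability `δ(ε)` of the adversary. -/
noncomputable def cutDelta (ε : ℝ) : ℝ :=
  if ε ≤ 1 / 3 then 1 else (1 - 2 * ε) ^ 2 / ε ^ 2

/-- The effective noise `ε'(ε)` on the two edges incident to a marked (uncut) node. -/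
noncomputable def epsPrime (ε : ℝ) : ℝ :=
  if ε ≤ 1 / 3 then 1 / 2 - (1 / 2) * Real.sqrt ((1 - 3 * ε) / (1 + ε)) else 1 / 2

-- `(1 - 2ε)² (1 + ε) = 1 - 3ε + 4ε³`
theorem div_lt_one_sub_two_mul_sq {ε : ℝ} (hε : 0 < ε) :
    (1 - 3 * ε) / (1 + ε) < (1 - 2 * ε) ^ 2 := by
  rw [div_lt_iff₀ (by linarith)]
  nlinarith [pow_pos hε 3]

theorem epsPrime_le_half (ε : ℝ) : epsPrime ε ≤ 1 / 2 := by
  unfold epsPrime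
  split_ifs
  · linarith [Real.sqrt_nonneg ((1 - 3 * ε) / (1 + ε))]
  · rfl

theorem lt_epsPrime {ε : ℝ} (h0 : 0 < ε) (h2 : ε < 1 / 2) : ε < epsPrime ε := by
  unfold epsPrime
  split_ifs with h
  · have hsqrt : Real.sqrt ((1 - 3 * ε) / (1 + ε)) < 1 - 2 * ε :=
      (Real.sqrt_lt' (by linarith)).2 (div_lt_one_sub_two_mul_sq h0)
    linarith
  · exact h2

theorem stmt2 : ∀ ε ∈ Set.Ioo (0 : ℝ) (1 / 2), ε < epsPrime ε ∧ epsPrime ε ≤ 1 / 2 :=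
  fun _ ⟨h0, h2⟩ => ⟨lt_epsPrime h0 h2, epsPrime_le_half _⟩
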